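/- arXiv:2002.01303 — 2 statements merged into one kernel-verified Lean document; each statement's English description precedes it below -/
import Mathlib

section
/- Let $T$ be a positive self-adjoint compact operator on a separable Hilbert space with eigenvalues $t_1 \ge t_2 \ge \cdots \ge 0$ satisfying $t_n \le \mu n^{-1/b}$ for all $n$, where $\mu > 0$ and $0 < b < 1$. Then there exists a constant $c > 0$ (depending on $\mu$ and $b$) such that the effective dimension $\mathcal{N}(\lambda) = \sum_{n=1}^\infty \frac{t_n}{\lambda + t_n}$ satisfies $\mathcal{N}(\lambda) \le c \lambda^{-b}$ for all $\lambda > 0$. -/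
/-!
Each term `tₙ / (λ + tₙ)` is at most `1` and at most `tₙ / λ ≤ (μ / λ) (n + 1)^{-p}` with
`p = 1 / b > 1`. Cut the series at `N = ⌊x⌋` where `x = (μ / λ)^b`: the first `N` terms
contribute at most `x`, and comparing the tail of the `p`-series with `∫ y^{-p} dy` bounds the
rest by `(μ / λ) · p / (p - 1) · (N + 1)^{1-p} ≤ p / (p - 1) · x`, since `x^p = μ / λ`.
-/

open Real Finset

lemma sum_range_rpow_neg_add_succ_le {x₀ p : ℝ} (hx₀ : 0 < x₀) (hp : 1 < p) (k : ℕ) :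
    ∑ i ∈ range k, (x₀ + ↑(i + 1)) ^ (-p) ≤ x₀ ^ (1 - p) / (p - 1) := by
  have hpos : ∀ y ∈ Set.Icc x₀ (x₀ + k), 0 < y := fun y hy => hx₀.trans_le hy.1
  have hanti : AntitoneOn (fun x : ℝ => x ^ (-p)) (Set.Icc x₀ (x₀ + k)) :=
    (antitoneOn_rpow_Ioi_of_exponent_nonpos (by linarith)).mono fun y hy => hpos y hy
  have hzero : (0 : ℝ) ∉ Set.uIcc x₀ (x₀ + k) := by
    rw [Set.uIcc_of_le (by simp)]
    exact fun h => (hpos 0 h).false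
  calc ∑ i ∈ range k, (x₀ + ↑(i + 1)) ^ (-p)
      ≤ ∫ x in x₀..x₀ + k, x ^ (-p) := hanti.sum_le_integral
    _ = (x₀ ^ (1 - p) - (x₀ + k) ^ (1 - p)) / (p - 1) := by
      rw [integral_rpow (Or.inr ⟨by linarith, hzero⟩), ← neg_div_neg_eq]
      ring_nf
    _ ≤ x₀ ^ (1 - p) / (p - 1) := by
      gcongr
      exact sub_le_self _ (rpow_nonneg (by positivity) _)

lemma sum_range_rpow_neg_add_le {x₀ p : ℝ} (hx₀ : 1 ≤ x₀) (hp : 1 < p) (k : ℕ) :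
    ∑ i ∈ range k, (x₀ + i) ^ (-p) ≤ p / (p - 1) * x₀ ^ (1 - p) := by
  have hx₀_pos : 0 < x₀ := by linarith
  have hfirst : x₀ ^ (-p) ≤ x₀ ^ (1 - p) := rpow_le_rpow_of_exponent_le hx₀ (by linarith)
  have hsplit : p / (p - 1) * x₀ ^ (1 - p) = x₀ ^ (1 - p) / (p - 1) + x₀ ^ (1 - p) := by
    field_simp [(by linarith : p - 1 ≠ 0)]
    ring
  rw [hsplit]
  cases k with
  | zero => simp; positivity
  | succ k =>
    rw [sum_range_succ']
    push_cast
    simpa using add_le_add (sum_range_rpow_neg_add_succ_le hx₀_pos hp k) hfirst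

lemma sum_range_le_of_le_one_of_le_mul_rpow_neg {f : ℕ → ℝ} {a p : ℝ} (ha : 0 < a) (hp : 1 < p)
    (hf₀ : ∀ n, 0 ≤ f n) (hf₁ : ∀ n, f n ≤ 1) (hfa : ∀ n, f n ≤ a * ((n : ℝ) + 1) ^ (-p))
    (k : ℕ) : ∑ n ∈ range k, f n ≤ (1 + p / (p - 1)) * a ^ p⁻¹ := by
  set x := a ^ p⁻¹
  have hx : 0 < x := rpow_pos_of_pos ha _
  set N := ⌊x⌋₊
  have hN : x ≤ (N : ℝ) + 1 := (Nat.lt_floor_add_one x).le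
  have hax : a * x ^ (1 - p) = x := by
    have : a = x ^ p := by rw [← rpow_mul ha.le, inv_mul_cancel₀ (by linarith), rpow_one]
    rw [this, ← rpow_add hx]
    simp
  have head : ∑ n ∈ range N, f n ≤ x := by
    calc ∑ n ∈ range N, f n ≤ ∑ n ∈ range N, (1 : ℝ) := sum_le_sum fun n _ => hf₁ n
      _ = N := by simp
      _ ≤ x := Nat.floor_le hx.le
  have tail : ∑ i ∈ range k, f (N + i) ≤ p / (p - 1) * x := by
    calc ∑ i ∈ range k, f (N + i) ≤ ∑ i ∈ range k, a * (((N : ℝ) + 1) + i) ^ (-p) := by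
          refine sum_le_sum fun i _ => (hfa _).trans_eq ?_
          push_cast
          ring_nf
      _ = a * ∑ i ∈ range k, (((N : ℝ) + 1) + i) ^ (-p) := by rw [mul_sum]
      _ ≤ a * (p / (p - 1) * ((N : ℝ) + 1) ^ (1 - p)) := by
          gcongr
          exact sum_range_rpow_neg_add_le (by simp) hp k
      _ ≤ a * (p / (p - 1) * x ^ (1 - p)) := by
          have hc : 0 < p / (p - 1) := div_pos (by linarith) (by linarith)
          gcongr a * (_ * ?_)
          exact rpow_le_rpow_of_nonpos hx hN (by linarith)
      _ = p / (p - 1) * (a * x ^ (1 - p)) := by ring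
      _ = p / (p - 1) * x := by rw [hax]
  calc ∑ n ∈ range k, f n ≤ ∑ n ∈ range (N + k), f n :=
        sum_le_sum_of_subset_of_nonneg (range_mono (by omega)) fun n _ _ => hf₀ n
    _ = ∑ n ∈ range N, f n + ∑ i ∈ range k, f (N + i) := sum_range_add f N k
    _ ≤ (1 + p / (p - 1)) * x := by linarith

theorem stmt2_general (t : ℕ → ℝ) (ht0 : ∀ n, 0 ≤ t n) (μ b : ℝ) (hμ : 0 < μ) (hb0 : 0 < b) (hb1 : b < 1)
    (hdecay : ∀ n : ℕ, t n ≤ μ * ((n : ℝ) + 1) ^ (-(1 / b))) :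
    ∃ c : ℝ, 0 < c ∧ ∀ lam : ℝ, 0 < lam →
      (∑' n, t n / (lam + t n)) ≤ c * lam ^ (-b) := by
  have hp : 1 < 1 / b := one_lt_one_div hb0 hb1
  refine ⟨(1 + 1 / b / (1 / b - 1)) * μ ^ b, by positivity, fun lam hlam => ?_⟩
  have hden : ∀ n, 0 < lam + t n := fun n => by linarith [ht0 n]
  have hnonneg : ∀ n, 0 ≤ t n / (lam + t n) := fun n => div_nonneg (ht0 n) (hden n).le
  have hterm : ∀ n, t n / (lam + t n) ≤ μ / lam * ((n : ℝ) + 1) ^ (-(1 / b)) := fun n =>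
    calc t n / (lam + t n) ≤ t n / lam :=
          div_le_div_of_nonneg_left (ht0 n) hlam (by linarith [ht0 n])
      _ ≤ μ * ((n : ℝ) + 1) ^ (-(1 / b)) / lam := by gcongr; exact hdecay n
      _ = _ := by ring
  have hpow : (μ / lam) ^ (1 / b)⁻¹ = μ ^ b * lam ^ (-b) := by
    rw [one_div, inv_inv, div_rpow hμ.le hlam.le, rpow_neg hlam.le, div_eq_mul_inv]
  refine tsum_le_of_sum_range_le hnonneg fun k => ?_
  calc ∑ n ∈ range k, t n / (lam + t n) ≤ (1 + 1 / b / (1 / b - 1)) * (μ / lam) ^ (1 / b)⁻¹ :=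
        sum_range_le_of_le_one_of_le_mul_rpow_neg (div_pos hμ hlam) hp hnonneg
          (fun n => (div_le_one (hden n)).2 (by linarith [ht0 n])) hterm k
    _ = _ := by rw [hpow]; ring

/-- Polynomial decay of the eigenvalues `t n ≤ μ (n+1)^{-1/b}` of a positive self-adjoint
compact (trace-class) operator implies the power-type bound `𝒩(λ) ≤ c λ^{-b}` for the
effective dimension `𝒩(λ) = ∑ n, t n / (λ + t n)`. -/
theorem stmt2 (t : ℕ → ℝ) (ht0 : ∀ n, 0 ≤ t n) (hmono : Antitone t)
    (hsum : Summable t) (μ b : ℝ) (hμ : 0 < μ) (hb0 : 0 < b) (hb1 : b < 1)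
    (hdecay : ∀ n : ℕ, t n ≤ μ * ((n : ℝ) + 1) ^ (-(1 / b))) :
    ∃ c : ℝ, 0 < c ∧ ∀ lam : ℝ, 0 < lam →
      (∑' n, t n / (lam + t n)) ≤ c * lam ^ (-b) :=
  stmt2_general t ht0 μ b hμ hb0 hb1 hdecay
end

section
/- Let $T_\nu$ and $T_{\mathbf{x}}$ be positive self-adjoint bounded operators on a Hilbert space $H$, $\lambda > 0$, and set $\Psi = \|(T_\nu + \lambda I)^{-1/2}(T_\nu - T_{\mathbf{x}})\|$. Then for $0 \le s \le 1$, $\|(T_{\mathbf{x}} + \lambda I)^{-s}(T_\nu + \lambda I)^{s}\| \le \left( \frac{\Psi}{\sqrt{\lambda}} + 1 \right)^{2s}$. -/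
/-!
Write `f u = ‖A (-u) * B u‖`. For `X = A (-m) * B m` with `m = (u + v) / 2`, the C⋆-identity gives
`‖X‖ ^ 2 = ‖X⋆ * X‖`, and `X⋆ * X` factors as `U * V` with
`V * U = (A (-u) * B u) * (A (-v) * B v)⋆`. The norm of the self-adjoint `U * V` is its spectral
radius, which is also that of `V * U`, so `f m ^ 2 ≤ f u * f v`. Being continuous with `f 0 ≤ 1`,
`f` then satisfies `f s ≤ M ^ s` on `[0, 1]` as soon as `f 1 ≤ M` (the closed set
`{u | f u ≤ M ^ u}` contains all dyadic points). For `s = 1`,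
`A (-1) * B 1 = 1 + A (-1/2) * (A (-1/2) * B (1/2)) * (B (-1/2) * (Tν - Tx))` and
`‖A (-1/2)‖ ≤ λ^(-1/2)`, so `f 1 ≤ 1 + (Ψ/√λ) f (1/2) ≤ 1 + (Ψ/√λ) √(f 1)`, whence
`f 1 ≤ (Ψ/√λ + 1) ^ 2`.
-/

open Filter Topology Set

lemma Icc_subset_of_isClosed_of_midpoint_mem {T : Set ℝ} (hT : IsClosed T) (h0 : 0 ∈ T)
    (h1 : 1 ∈ T) (hmid : ∀ s ∈ T, ∀ t ∈ T, (s + t) / 2 ∈ T) : Icc 0 1 ⊆ T := by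
  have hdyadic : ∀ n k : ℕ, k ≤ 2 ^ n → (k : ℝ) / 2 ^ n ∈ T := by
    intro n
    induction n with
    | zero =>
      intro k hk
      interval_cases k <;> simpa
    | succ n ih =>
      intro k hk
      rcases Nat.even_or_odd' k with ⟨j, rfl | rfl⟩
      · convert ih j (by omega) using 1
        push_cast; ring
      · convert hmid _ (ih j (by omega)) _ (ih (j + 1) (by omega)) using 1
        push_cast; ring
  intro x hx
  have hfloor : Tendsto (fun n : ℕ ↦ (⌊x * 2 ^ n⌋₊ : ℝ) / 2 ^ n) atTop (𝓝 x) :=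
    (tendsto_nat_floor_mul_div_atTop hx.1).comp (tendsto_pow_atTop_atTop_of_one_lt one_lt_two)
  refine hT.mem_of_tendsto hfloor (Eventually.of_forall fun n ↦ hdyadic n _ ?_)
  exact Nat.floor_le_of_le (by push_cast; exact mul_le_of_le_one_left (by positivity) hx.2)

lemma le_rpow_of_sq_midpoint_le {f : ℝ → ℝ} (hf : Continuous f) (hf_nonneg : ∀ u, 0 ≤ f u)
    (hmid : ∀ u v, f ((u + v) / 2) ^ 2 ≤ f u * f v) {M : ℝ} (hM : 0 < M) (h0 : f 0 ≤ 1)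
    (h1 : f 1 ≤ M) {s : ℝ} (hs : s ∈ Icc 0 1) : f s ≤ M ^ s := by
  refine Icc_subset_of_isClosed_of_midpoint_mem (T := {u | f u ≤ M ^ u})
    (isClosed_le hf (continuous_const.rpow continuous_id fun _ ↦ .inl hM.ne'))
    (by simpa using h0) (by simpa using h1) (fun u hu v hv ↦ ?_) hs
  refine (pow_le_pow_iff_left₀ (hf_nonneg _) (by positivity) two_ne_zero).1 ?_
  calc f ((u + v) / 2) ^ 2 ≤ M ^ u * M ^ v :=
        (hmid u v).trans (mul_le_mul hu hv (hf_nonneg v) (by positivity))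
    _ = (M ^ ((u + v) / 2)) ^ 2 := by
        rw [← Real.rpow_add hM, ← Real.rpow_natCast, ← Real.rpow_mul hM.le]
        ring_nf

lemma le_of_frequently_pow_succ_le_mul_pow {a r C : ℝ} (hr : 0 ≤ r)
    (h : ∃ᶠ n in atTop, a ^ (n + 1) ≤ C * r ^ n) : a ≤ r := by
  by_contra! hra
  have ha : 0 < a := hr.trans_lt hra
  have hlim : Tendsto (fun n : ℕ ↦ C * (r / a) ^ n) atTop (𝓝 0) := by
    simpa using (tendsto_pow_atTop_nhds_zero_of_lt_one (by positivity)
      ((div_lt_one ha).2 hra)).const_mul C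
  obtain ⟨n, hn, hlt⟩ := (h.and_eventually (hlim.eventually (gt_mem_nhds ha))).exists
  have : C * r ^ n < a ^ (n + 1) := by
    have := mul_lt_mul_of_pos_right hlt (pow_pos ha n)
    rwa [mul_assoc, div_pow, div_mul_cancel₀ _ (pow_pos ha n).ne', ← pow_succ'] at this
  exact hn.not_gt this

lemma norm_mul_pow_mul_le {R : Type*} [SeminormedRing R] (U V : R) (n : ℕ) :
    ‖(U * V) ^ n * U‖ ≤ ‖U‖ * ‖V * U‖ ^ n := by
  induction n with
  | zero => simp
  | succ n ih =>
    calc ‖(U * V) ^ (n + 1) * U‖ = ‖(U * V) ^ n * U * (V * U)‖ := by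
          simp only [pow_succ, mul_assoc]
      _ ≤ ‖U‖ * ‖V * U‖ ^ n * ‖V * U‖ := (norm_mul_le _ _).trans (by gcongr)
      _ = ‖U‖ * ‖V * U‖ ^ (n + 1) := by ring

section CStarRing

variable {R : Type*} [NormedRing R] [StarRing R] [CStarRing R]

lemma CStarRing.norm_one_le : ‖(1 : R)‖ ≤ 1 := by
  rcases subsingleton_or_nontrivial R with _ | _
  · simp [Subsingleton.elim (1 : R) 0]
  · exact CStarRing.norm_one.le

lemma IsSelfAdjoint.norm_mul_le_norm_mul_comm {U V : R} (h : IsSelfAdjoint (U * V)) :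
    ‖U * V‖ ≤ ‖V * U‖ := by
  refine le_of_frequently_pow_succ_le_mul_pow (C := ‖U‖ * ‖V‖) (norm_nonneg _) ?_
  refine frequently_atTop.2 fun N ↦ ⟨2 ^ N - 1, ?_, ?_⟩
  · have := N.lt_two_pow_self; omega
  · calc ‖U * V‖ ^ (2 ^ N - 1 + 1) = ‖(U * V) ^ (2 ^ N - 1) * U * V‖ := by
          rw [Nat.sub_add_cancel N.one_le_two_pow, ← h.norm_pow_two_pow, mul_assoc,
            ← pow_succ, Nat.sub_add_cancel N.one_le_two_pow]
      _ ≤ ‖U‖ * ‖V * U‖ ^ (2 ^ N - 1) * ‖V‖ :=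
          (norm_mul_le _ _).trans (by gcongr; exact norm_mul_pow_mul_le U V _)
      _ = ‖U‖ * ‖V‖ * ‖V * U‖ ^ (2 ^ N - 1) := by ring

variable {A B : ℝ → R}

lemma norm_mul_midpoint_sq_le (hA : ∀ s t, A (s + t) = A s * A t)
    (hB : ∀ s t, B (s + t) = B s * B t) (hAsa : ∀ s, IsSelfAdjoint (A s))
    (hBsa : ∀ s, IsSelfAdjoint (B s)) (u v : ℝ) :
    ‖A (-((u + v) / 2)) * B ((u + v) / 2)‖ ^ 2 ≤ ‖A (-u) * B u‖ * ‖A (-v) * B v‖ := by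
  have hAm : A (-((u + v) / 2)) * A (-((u + v) / 2)) = A (-v) * A (-u) := by
    rw [← hA, ← hA]; ring_nf
  have hBm : B ((u + v) / 2) * B ((u + v) / 2) = B u * B v := by
    rw [← hB, ← hB]; ring_nf
  set X := A (-((u + v) / 2)) * B ((u + v) / 2)
  set U := B ((u + v) / 2) * A (-v)
  set V := A (-u) * B ((u + v) / 2)
  have hUV : star X * X = U * V := by
    simp only [X, U, V, star_mul, (hAsa _).star_eq, (hBsa _).star_eq, mul_assoc]
    rw [← mul_assoc (A _), hAm, mul_assoc]
  have hVU : V * U = (A (-u) * B u) * star (A (-v) * B v) := by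
    simp only [U, V, star_mul, (hAsa _).star_eq, (hBsa _).star_eq, mul_assoc]
    rw [← mul_assoc (B _), hBm, mul_assoc]
  calc ‖X‖ ^ 2 = ‖U * V‖ := by rw [← hUV, CStarRing.norm_star_mul_self, sq]
    _ ≤ ‖V * U‖ := (hUV ▸ IsSelfAdjoint.star_mul_self X).norm_mul_le_norm_mul_comm
    _ ≤ ‖A (-u) * B u‖ * ‖A (-v) * B v‖ := hVU ▸ (norm_mul_le _ _).trans_eq (by rw [norm_star])

lemma norm_neg_one_mul_one_le (hA0 : A 0 = 1) (hB0 : B 0 = 1)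
    (hA : ∀ s t, A (s + t) = A s * A t) (hB : ∀ s t, B (s + t) = B s * B t)
    (hAsa : ∀ s, IsSelfAdjoint (A s)) (hBsa : ∀ s, IsSelfAdjoint (B s)) :
    ‖A (-1) * B 1‖ ≤ (‖A (-(1 / 2))‖ * ‖B (-(1 / 2)) * (B 1 - A 1)‖ + 1) ^ 2 := by
  set c := ‖A (-(1 / 2))‖ * ‖B (-(1 / 2)) * (B 1 - A 1)‖
  have hsplit : A (-1) * B 1
      = 1 + A (-(1 / 2)) * (A (-(1 / 2)) * B (1 / 2)) * (B (-(1 / 2)) * (B 1 - A 1)) := by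
    have hA1 : A (-1) * A 1 = 1 := by rw [← hA]; norm_num [hA0]
    have hAh : A (-(1 / 2)) * A (-(1 / 2)) = A (-1) := by rw [← hA]; norm_num
    have hBh : B (1 / 2) * B (-(1 / 2)) = 1 := by rw [← hB]; norm_num [hB0]
    calc A (-1) * B 1 = A (-1) * A 1 + A (-(1 / 2)) * A (-(1 / 2)) * (B (1 / 2) * B (-(1 / 2)))
        * (B 1 - A 1) := by rw [hAh, hBh]; noncomm_ring
      _ = _ := by rw [hA1]; simp only [mul_assoc]
  have hf_half : ‖A (-(1 / 2)) * B (1 / 2)‖ ^ 2 ≤ ‖A (-1) * B 1‖ :=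
    calc _ ≤ ‖(1 : R)‖ * ‖A (-1) * B 1‖ := by
          simpa [hA0, hB0] using norm_mul_midpoint_sq_le hA hB hAsa hBsa 0 1
      _ ≤ ‖A (-1) * B 1‖ := mul_le_of_le_one_left (norm_nonneg _) CStarRing.norm_one_le
  have hf_one : ‖A (-1) * B 1‖ ≤ 1 + c * ‖A (-(1 / 2)) * B (1 / 2)‖ :=
    calc _ ≤ ‖(1 : R)‖ + ‖A (-(1 / 2))‖ * ‖A (-(1 / 2)) * B (1 / 2)‖
          * ‖B (-(1 / 2)) * (B 1 - A 1)‖ := by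
          rw [hsplit]
          exact (norm_add_le _ _).trans (by gcongr; exact norm_mul₃_le)
      _ ≤ _ := by grw [CStarRing.norm_one_le]; linarith
  have hc : 0 ≤ c := by positivity
  have hy : ‖A (-(1 / 2)) * B (1 / 2)‖ ≤ c + 1 := by
    nlinarith [norm_nonneg (A (-(1 / 2)) * B (1 / 2))]
  nlinarith

end CStarRing

lemma ContinuousLinearMap.IsPositive.norm_le_inv_of_add_smul_one_mul_eq_one {H : Type*}
    [NormedAddCommGroup H] [InnerProductSpace ℝ H] {T S : H →L[ℝ] H} (hT : T.IsPositive)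
    {lam : ℝ} (hlam : 0 < lam) (hS : (T + lam • 1) * S = 1) : ‖S‖ ≤ lam⁻¹ := by
  have hlower : ∀ x, lam * ‖x‖ ≤ ‖(T + lam • 1) x‖ := by
    intro x
    rcases (norm_nonneg x).eq_or_lt with hx | hx
    · simp [← hx]
    refine le_of_mul_le_mul_right ?_ hx
    calc lam * ‖x‖ * ‖x‖ ≤ inner ℝ ((T + lam • 1) x) x := by
          have := hT.inner_nonneg_left x
          simp only [add_apply, smul_apply, one_apply_eq_self, inner_add_left,
            real_inner_smul_left, real_inner_self_eq_norm_sq] at this ⊢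
          nlinarith
      _ ≤ ‖(T + lam • 1) x‖ * ‖x‖ := real_inner_le_norm _ _
  refine opNorm_le_bound _ (inv_nonneg.2 hlam.le) fun y ↦ ?_
  have := hlower (S y)
  rw [← mul_apply_eq_comp, hS, one_apply_eq_self] at this
  rw [inv_mul_eq_div, le_div_iff₀' hlam]
  exact this

theorem stmt12_general {H : Type*} [NormedAddCommGroup H] [InnerProductSpace ℝ H] [CompleteSpace H]
    (Tν Tx : H →L[ℝ] H) (hTx : Tx.IsPositive)
    (lam : ℝ) (hlam : 0 < lam)
    (A B : ℝ → (H →L[ℝ] H))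
    (hA1 : A 1 = Tx + lam • 1) (hB1 : B 1 = Tν + lam • 1)
    (hA0 : A 0 = 1) (hB0 : B 0 = 1)
    (hAgrp : ∀ s s' : ℝ, A (s + s') = A s ∘L A s')
    (hBgrp : ∀ s s' : ℝ, B (s + s') = B s ∘L B s')
    (hApos : ∀ s, (A s).IsPositive) (hBpos : ∀ s, (B s).IsPositive)
    (hAcont : Continuous A) (hBcont : Continuous B)
    (Ψ : ℝ) (hΨ : Ψ = ‖B (-(1 / 2)) ∘L (Tν - Tx)‖) :
    ∀ s : ℝ, 0 ≤ s → s ≤ 1 →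
      ‖A (-s) ∘L B s‖ ≤ (Ψ / Real.sqrt lam + 1) ^ (2 * s) := by
  intro s hs0 hs1
  have hA : ∀ s t, A (s + t) = A s * A t := hAgrp
  have hB : ∀ s t, B (s + t) = B s * B t := hBgrp
  have hΨ0 : 0 ≤ Ψ := hΨ ▸ norm_nonneg _
  have hAsa (s : ℝ) := (hApos s).isSelfAdjoint
  have hBsa (s : ℝ) := (hBpos s).isSelfAdjoint
  have hA_half : ‖A (-(1 / 2))‖ ≤ (Real.sqrt lam)⁻¹ := by
    rw [← Real.sqrt_inv, Real.le_sqrt (norm_nonneg _) (inv_nonneg.2 hlam.le),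
      ← (hAsa _).norm_mul_self]
    refine hTx.norm_le_inv_of_add_smul_one_mul_eq_one hlam ?_
    rw [← hA1, ← hA, ← hA]
    norm_num [hA0]
  have hf1 : ‖A (-1) * B 1‖ ≤ (Ψ / Real.sqrt lam + 1) ^ 2 := by
    refine (norm_neg_one_mul_one_le hA0 hB0 hA hB hAsa hBsa).trans ?_
    have hBA : B 1 - A 1 = Tν - Tx := by rw [hA1, hB1]; abel
    rw [hBA, ContinuousLinearMap.mul_def, ← hΨ]
    gcongr
    exact (mul_le_mul_of_nonneg_right hA_half hΨ0).trans_eq (inv_mul_eq_div _ _)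
  calc ‖A (-s) ∘L B s‖ ≤ ((Ψ / Real.sqrt lam + 1) ^ 2) ^ s :=
        le_rpow_of_sq_midpoint_le (((hAcont.comp continuous_neg).mul hBcont).norm)
          (fun _ ↦ norm_nonneg _) (norm_mul_midpoint_sq_le hA hB hAsa hBsa) (by positivity)
          (by simpa [hA0, hB0] using CStarRing.norm_one_le) hf1 ⟨hs0, hs1⟩
    _ = (Ψ / Real.sqrt lam + 1) ^ (2 * s) := by
        rw [← Real.rpow_natCast, ← Real.rpow_mul (by positivity)]
        norm_num

/-- Perturbation bound for powers of shifted operators. Here `A` and `B` are the one-parameter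
groups of powers `s ↦ (T_x + λ I)^s` and `s ↦ (T_ν + λ I)^s` (characterized by the group law,
positivity, continuity, and their values at `0` and `1`), and
`Ψ = ‖(T_ν + λ I)^{-1/2} (T_ν - T_x)‖`. Then for `0 ≤ s ≤ 1`,
`‖(T_x + λ I)^{-s} (T_ν + λ I)^s‖ ≤ (Ψ/√λ + 1)^{2s}`. -/
theorem stmt12 {H : Type*} [NormedAddCommGroup H] [InnerProductSpace ℝ H] [CompleteSpace H]
    (Tν Tx : H →L[ℝ] H) (hTν : Tν.IsPositive) (hTx : Tx.IsPositive)
    (lam : ℝ) (hlam : 0 < lam)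
    (A B : ℝ → (H →L[ℝ] H))
    (hA1 : A 1 = Tx + lam • 1) (hB1 : B 1 = Tν + lam • 1)
    (hA0 : A 0 = 1) (hB0 : B 0 = 1)
    (hAgrp : ∀ s s' : ℝ, A (s + s') = A s ∘L A s')
    (hBgrp : ∀ s s' : ℝ, B (s + s') = B s ∘L B s')
    (hApos : ∀ s, (A s).IsPositive) (hBpos : ∀ s, (B s).IsPositive)
    (hAcont : Continuous A) (hBcont : Continuous B)
    (Ψ : ℝ) (hΨ : Ψ = ‖B (-(1 / 2)) ∘L (Tν - Tx)‖) :
    ∀ s : ℝ, 0 ≤ s → s ≤ 1 →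
      ‖A (-s) ∘L B s‖ ≤ (Ψ / Real.sqrt lam + 1) ^ (2 * s) :=
  stmt12_general Tν Tx hTx lam hlam A B hA1 hB1 hA0 hB0 hAgrp hBgrp hApos hBpos hAcont hBcont Ψ hΨ
end
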